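/- There exists a constant c > 0 depending only on the bounded Vilenkin sequence m such that for every n with M_A ≤ n < M_{A+1} and every x ∈ G_m, n|K_n(x)| ≤ c ∑_{s=0}^{A} M_s ∑_{j=s}^{A} ∑_{x_s=1}^{m_s-1} D_{M_j}(x − x_s e_s). -/

import Mathlib

/-!
Write `S_n = n K_n = ∑_{k<n} D_k`. Since `ψ_{a M_j + i} = r_j^a ψ_i` for `a < m_j`, `i < M_j`,
splitting `n = q M_A + r` along its leading digit gives
`‖S_n‖ ≤ m_A² (M_A ‖D_{M_A}‖ + ‖S_{M_A}‖) + ‖S_r‖`, so `‖S_n‖` is controlled by the quantities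
`M_t ‖D_{M_t}‖ + ‖S_{M_t}‖`, `t ≤ A`. As `D_{M_{t+1}} = (∑_{c<m_t} r_t^c) D_{M_t}` and this
geometric sum is `m_t` or `0` according as `x_t = 0` or not, induction on `t` gives
`‖S_{M_t}(x)‖ ≤ ∑_{u<t} M_{u+1} ‖D_{M_t}(x - x_u e_u)‖`. Each `x - x_u e_u` is either `x` or a
shift `x - v e_u` with `1 ≤ v < m_u`; the unshifted terms are absorbed by `∑_{u<t} M_u ≤ M_t`
and `D_{M_t}(x - e_t) = D_{M_t}(x)`. Boundedness of `m` makes every constant depend on the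
bound `B` alone.
-/

open Complex Finset

noncomputable section

/-- The generalized number system: `M 0 = 1`, `M (k+1) = m k * M k`. -/
def Mf (m : ℕ → ℕ) : ℕ → ℕ
  | 0 => 1
  | k + 1 => m k * Mf m k

/-- The generalized Rademacher function `r_k(x) = exp(2πi x_k / m_k)`. -/
def rad (m : ℕ → ℕ) (k : ℕ) (x : ∀ j, ZMod (m j)) : ℂ :=
  Complex.exp (2 * Real.pi * Complex.I * (x k).val / (m k))

/-- The Vilenkin function `ψ_n(x) = ∏ k, r_k(x)^{n_k}` where `n_k = (n / M_k) % m_k`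
is the k-th digit of `n` in the generalized number system. -/
def psi (m : ℕ → ℕ) (n : ℕ) (x : ∀ j, ZMod (m j)) : ℂ :=
  ∏ k ∈ Finset.range (n + 1), rad m k x ^ ((n / Mf m k) % m k)

/-- Vilenkin Dirichlet kernel. -/
def Dker (m : ℕ → ℕ) (n : ℕ) (x : ∀ j, ZMod (m j)) : ℂ :=
  ∑ j ∈ Finset.range n, psi m j x

/-- One-dimensional Vilenkin Fejér kernel. -/
def Fejer (m : ℕ → ℕ) (n : ℕ) (x : ∀ j, ZMod (m j)) : ℂ :=
  (n : ℂ)⁻¹ * ∑ k ∈ Finset.range n, Dker m k x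

/-- Two-dimensional Marcinkiewicz–Fejér kernel. -/
def MKer (m : ℕ → ℕ) (n : ℕ) (x y : ∀ j, ZMod (m j)) : ℂ :=
  (n : ℂ)⁻¹ * ∑ k ∈ Finset.range n, Dker m k x * Dker m k y

/-- `e_s ∈ G_m`: the element whose s-th coordinate is 1 and all others are 0. -/
def evec (m : ℕ → ℕ) (s : ℕ) : ∀ j, ZMod (m j) :=
  fun j => if j = s then 1 else 0

/-- `r_{i,n}(x,y) = ∏_{l=i}^{n} ∑_{s=0}^{m_l-1} ψ_{M_l}(x+y)^s`. -/
def rr (m : ℕ → ℕ) (i n : ℕ) (x y : ∀ j, ZMod (m j)) : ℂ :=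
  ∏ l ∈ Finset.Icc i n, ∑ s ∈ Finset.range (m l), psi m (Mf m l) (x + y) ^ s


variable {m : ℕ → ℕ}

lemma Mf_succ (m : ℕ → ℕ) (k : ℕ) : Mf m (k + 1) = m k * Mf m k := rfl

lemma Mf_pos (hm : ∀ k, 0 < m k) (k : ℕ) : 0 < Mf m k := by
  induction k with
  | zero => exact Nat.one_pos
  | succ k ih => exact Nat.mul_pos (hm k) ih

lemma Mf_eq_mul_prod_Ico (m : ℕ → ℕ) {k j : ℕ} (h : k ≤ j) :
    Mf m j = Mf m k * ∏ l ∈ Ico k j, m l := by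
  induction j, h using Nat.le_induction with
  | base => simp
  | succ j hj ih => rw [Mf_succ, ih, prod_Ico_succ_top hj]; ring

lemma Mf_mono (hm : ∀ k, 0 < m k) : Monotone (Mf m) :=
  monotone_nat_of_le_succ fun k => by
    rw [Mf_succ]; exact Nat.le_mul_of_pos_left _ (hm k)

lemma lt_Mf_self (hm : ∀ k, 2 ≤ m k) (k : ℕ) : k < Mf m k := by
  induction k with
  | zero => exact Nat.one_pos
  | succ k ih => rw [Mf_succ]; nlinarith [hm k]

lemma sum_range_Mf_le (hm : ∀ k, 2 ≤ m k) (t : ℕ) : ∑ u ∈ range t, Mf m u ≤ Mf m t := by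
  induction t with
  | zero => simp
  | succ t ih => rw [sum_range_succ, Mf_succ]; nlinarith [hm t]

lemma psi_eq_prod_range (hm : ∀ k, 2 ≤ m k) {n N : ℕ} (hN : n < N) (x : ∀ j, ZMod (m j)) :
    psi m n x = ∏ k ∈ range N, rad m k x ^ ((n / Mf m k) % m k) := by
  refine prod_subset (range_subset_range.mpr hN) fun k _ hk => ?_
  have hnk : n < Mf m k := by
    rw [mem_range, not_lt] at hk
    exact (Nat.lt_of_succ_le hk).trans (lt_Mf_self hm k)
  rw [Nat.div_eq_of_lt hnk, Nat.zero_mod, pow_zero]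

lemma digit_mul_Mf_add (hm : ∀ k, 2 ≤ m k) {j a i : ℕ} (ha : a < m j) (hi : i < Mf m j)
    (k : ℕ) :
    (a * Mf m j + i) / Mf m k % m k = i / Mf m k % m k + if k = j then a else 0 := by
  have hpos : ∀ k, 0 < m k := fun k => by linarith [hm k]
  rcases lt_trichotomy k j with hkj | rfl | hjk
  · obtain ⟨c, hc⟩ : m k ∣ ∏ l ∈ Ico k j, m l := dvd_prod_of_mem _ (mem_Ico.mpr ⟨le_rfl, hkj⟩)
    rw [if_neg hkj.ne, add_zero, Mf_eq_mul_prod_Ico m hkj.le, hc,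
      show a * (Mf m k * (m k * c)) + i = i + a * c * m k * Mf m k by ring,
      Nat.add_mul_div_right _ _ (Mf_pos hpos k), Nat.add_mul_mod_self_right]
  · rw [if_pos rfl, Nat.div_eq_of_lt hi, Nat.zero_mod, zero_add, mul_comm,
      Nat.mul_add_div (Mf_pos hpos k), Nat.div_eq_of_lt hi, add_zero, Nat.mod_eq_of_lt ha]
  · have hlt : a * Mf m j + i < Mf m k :=
      calc a * Mf m j + i < (a + 1) * Mf m j := by linarith
        _ ≤ Mf m (j + 1) := by rw [Mf_succ]; exact Nat.mul_le_mul_right _ ha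
        _ ≤ Mf m k := Mf_mono hpos hjk
    rw [if_neg hjk.ne', add_zero, Nat.div_eq_of_lt hlt, Nat.div_eq_of_lt (by omega)]

lemma psi_mul_Mf_add (hm : ∀ k, 2 ≤ m k) {j a i : ℕ} (ha : a < m j) (hi : i < Mf m j)
    (x : ∀ j, ZMod (m j)) :
    psi m (a * Mf m j + i) x = rad m j x ^ a * psi m i x := by
  set N := a * Mf m j + i + j + 1
  rw [psi_eq_prod_range hm (show _ < N by omega), psi_eq_prod_range hm (show i < N by omega)]
  simp_rw [digit_mul_Mf_add hm ha hi, pow_add, prod_mul_distrib, pow_ite, pow_zero,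
    prod_ite_eq' (range N) j, if_pos (mem_range.mpr (show j < N by omega))]
  ring

lemma Dker_mul_Mf_add (hm : ∀ k, 2 ≤ m k) {j a i : ℕ} (ha : a < m j) (hi : i ≤ Mf m j)
    (x : ∀ j, ZMod (m j)) :
    Dker m (a * Mf m j + i) x = Dker m (a * Mf m j) x + rad m j x ^ a * Dker m i x := by
  rw [Dker, sum_range_add, Dker, Dker, mul_sum]
  congr 1
  exact sum_congr rfl fun k hk => psi_mul_Mf_add hm ha ((mem_range.mp hk).trans_le hi) x

lemma Dker_mul_Mf (hm : ∀ k, 2 ≤ m k) {j b : ℕ} (hb : b ≤ m j) (x : ∀ j, ZMod (m j)) :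
    Dker m (b * Mf m j) x = (∑ c ∈ range b, rad m j x ^ c) * Dker m (Mf m j) x := by
  induction b with
  | zero => simp [Dker]
  | succ b ih =>
    rw [add_one_mul, Dker_mul_Mf_add hm hb le_rfl, ih (by omega), sum_range_succ, add_mul]

lemma rad_eq_pow (m : ℕ → ℕ) (k : ℕ) (x : ∀ j, ZMod (m j)) :
    rad m k x = exp (2 * Real.pi * I / m k) ^ (x k).val := by
  rw [rad, ← exp_nat_mul]
  congr 1
  ring

lemma norm_rad (m : ℕ → ℕ) (k : ℕ) (x : ∀ j, ZMod (m j)) : ‖rad m k x‖ = 1 := by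
  rw [rad, show 2 * Real.pi * I * (x k).val / m k = ((2 * Real.pi * (x k).val / m k : ℝ) : ℂ) * I
    by push_cast; ring]
  exact norm_exp_ofReal_mul_I _

lemma geom_sum_rad {k : ℕ} (hk : m k ≠ 0) (x : ∀ j, ZMod (m j)) :
    ∑ c ∈ range (m k), rad m k x ^ c = if x k = 0 then (m k : ℂ) else 0 := by
  have : NeZero (m k) := ⟨hk⟩
  have hζ := isPrimitiveRoot_exp (m k) hk
  split_ifs with hx
  · simp [rad_eq_pow, hx]
  · have hne : rad m k x ≠ 1 := by
      rw [rad_eq_pow, Ne, hζ.pow_eq_one_iff_dvd]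
      exact fun hdvd => hx ((ZMod.val_eq_zero _).mp (Nat.eq_zero_of_dvd_of_lt hdvd (ZMod.val_lt _)))
    rw [geom_sum_eq hne, rad_eq_pow, pow_right_comm, hζ.pow_eq_one, one_pow,
      sub_self, zero_div]

lemma Dker_one (m : ℕ → ℕ) (x : ∀ j, ZMod (m j)) : Dker m 1 x = 1 := by
  simp [Dker, psi]

lemma Dker_Mf_succ (hm : ∀ k, 2 ≤ m k) (t : ℕ) (x : ∀ j, ZMod (m j)) :
    Dker m (Mf m (t + 1)) x = (if x t = 0 then (m t : ℂ) else 0) * Dker m (Mf m t) x := by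
  rw [Mf_succ, Dker_mul_Mf hm le_rfl, geom_sum_rad (by linarith [hm t])]

lemma Dker_Mf (hm : ∀ k, 2 ≤ m k) (t : ℕ) (x : ∀ j, ZMod (m j)) :
    Dker m (Mf m t) x = ∏ k ∈ range t, if x k = 0 then (m k : ℂ) else 0 := by
  induction t with
  | zero => exact Dker_one m x
  | succ t ih => rw [Dker_Mf_succ hm, ih, prod_range_succ, mul_comm]

lemma Dker_Mf_congr (hm : ∀ k, 2 ≤ m k) {t : ℕ} {x y : ∀ j, ZMod (m j)}
    (h : ∀ k < t, x k = y k) : Dker m (Mf m t) x = Dker m (Mf m t) y := by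
  rw [Dker_Mf hm, Dker_Mf hm]
  exact prod_congr rfl fun k hk => by rw [h k (mem_range.mp hk)]

/-- `n K_n`, the Fejér kernel without its normalising factor. -/
def sumDker (m : ℕ → ℕ) (n : ℕ) (x : ∀ j, ZMod (m j)) : ℂ :=
  ∑ k ∈ range n, Dker m k x

lemma natCast_mul_Fejer (m : ℕ → ℕ) (n : ℕ) (x : ∀ j, ZMod (m j)) :
    (n : ℂ) * Fejer m n x = sumDker m n x := by
  rcases eq_or_ne n 0 with rfl | hn
  · simp [sumDker]
  · exact mul_inv_cancel_left₀ (Nat.cast_ne_zero.mpr hn) _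

lemma sumDker_mul_Mf_add (hm : ∀ k, 2 ≤ m k) {j q r : ℕ} (hq : q < m j) (hr : r ≤ Mf m j)
    (x : ∀ j, ZMod (m j)) :
    sumDker m (q * Mf m j + r) x = sumDker m (q * Mf m j) x
      + r * (∑ c ∈ range q, rad m j x ^ c) * Dker m (Mf m j) x
      + rad m j x ^ q * sumDker m r x := by
  have hblock : ∀ i ∈ range r, Dker m (q * Mf m j + i) x
      = (∑ c ∈ range q, rad m j x ^ c) * Dker m (Mf m j) x + rad m j x ^ q * Dker m i x :=
    fun i hi => by
      rw [Dker_mul_Mf_add hm hq ((mem_range.mp hi).le.trans hr), Dker_mul_Mf hm hq.le]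
  rw [sumDker, sum_range_add, sum_congr rfl hblock, sum_add_distrib, sum_const, card_range,
    nsmul_eq_mul, sumDker, sumDker, ← mul_sum]
  ring

lemma sumDker_mul_Mf (hm : ∀ k, 2 ≤ m k) {j q : ℕ} (hq : q ≤ m j) (x : ∀ j, ZMod (m j)) :
    sumDker m (q * Mf m j) x =
      Mf m j * (∑ b ∈ range q, ∑ c ∈ range b, rad m j x ^ c) * Dker m (Mf m j) x
      + (∑ b ∈ range q, rad m j x ^ b) * sumDker m (Mf m j) x := by
  induction q with
  | zero => simp [sumDker]
  | succ q ih =>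
    rw [add_one_mul, sumDker_mul_Mf_add hm hq le_rfl, ih (by omega), sum_range_succ,
      sum_range_succ]
    ring

section GeomSum

variable {R : Type*} [SeminormedRing R] [NormOneClass R] {z : R}

lemma norm_geom_sum_le (hz : ‖z‖ ≤ 1) (q : ℕ) : ‖∑ b ∈ range q, z ^ b‖ ≤ q :=
  calc ‖∑ b ∈ range q, z ^ b‖ ≤ ∑ b ∈ range q, ‖z ^ b‖ := norm_sum_le _ _
    _ ≤ ∑ _b ∈ range q, (1 : ℝ) :=
      sum_le_sum fun b _ => (norm_pow_le z b).trans (pow_le_one₀ (norm_nonneg z) hz)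
    _ = q := by simp

lemma norm_sum_geom_sum_le (hz : ‖z‖ ≤ 1) (q : ℕ) :
    ‖∑ b ∈ range q, ∑ c ∈ range b, z ^ c‖ ≤ (q : ℝ) ^ 2 :=
  calc ‖∑ b ∈ range q, ∑ c ∈ range b, z ^ c‖ ≤ ∑ b ∈ range q, ‖∑ c ∈ range b, z ^ c‖ :=
      norm_sum_le _ _
    _ ≤ ∑ _b ∈ range q, (q : ℝ) :=
      sum_le_sum fun b hb => (norm_geom_sum_le hz b).trans (by exact_mod_cast (mem_range.mp hb).le)
    _ = (q : ℝ) ^ 2 := by simp [sq]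

end GeomSum

lemma norm_sumDker_mul_Mf_add_le (hm : ∀ k, 2 ≤ m k) {j q r : ℕ} (hq : q < m j)
    (hr : r ≤ Mf m j) (x : ∀ j, ZMod (m j)) :
    ‖sumDker m (q * Mf m j + r) x‖ ≤
      (m j : ℝ) ^ 2 * (Mf m j * ‖Dker m (Mf m j) x‖ + ‖sumDker m (Mf m j) x‖)
        + ‖sumDker m r x‖ := by
  have hρ : ‖rad m j x‖ ≤ 1 := (norm_rad m j x).le
  have hq' : (q : ℝ) + 1 ≤ m j := by exact_mod_cast hq
  have hr' : (r : ℝ) ≤ Mf m j := by exact_mod_cast hr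
  set D := ‖Dker m (Mf m j) x‖
  set S := ‖sumDker m (Mf m j) x‖
  have hD : 0 ≤ D := norm_nonneg _
  have hS : 0 ≤ S := norm_nonneg _
  calc ‖sumDker m (q * Mf m j + r) x‖
      ≤ (Mf m j * (q : ℝ) ^ 2 * D + q * S) + r * q * D + ‖sumDker m r x‖ := by
        rw [sumDker_mul_Mf_add hm hq hr, sumDker_mul_Mf hm hq.le]
        refine (norm_add_le _ _).trans (add_le_add ((norm_add_le _ _).trans
          (add_le_add ((norm_add_le _ _).trans (add_le_add ?_ ?_)) ?_)) ?_)
        · rw [norm_mul, norm_mul, Complex.norm_natCast]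
          gcongr
          exact norm_sum_geom_sum_le hρ q
        · rw [norm_mul]
          gcongr
          exact norm_geom_sum_le hρ q
        · rw [norm_mul, norm_mul, Complex.norm_natCast]
          gcongr
          exact norm_geom_sum_le hρ q
        · rw [norm_mul, norm_pow, norm_rad, one_pow, one_mul]
    _ ≤ (m j : ℝ) ^ 2 * (Mf m j * D + S) + ‖sumDker m r x‖ := by
        have hM : (0 : ℝ) ≤ Mf m j := Nat.cast_nonneg _
        have hq0 : (0 : ℝ) ≤ q := Nat.cast_nonneg _
        have hq2 : (q : ℝ) ^ 2 + q ≤ (m j : ℝ) ^ 2 := by nlinarith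
        nlinarith [mul_le_mul_of_nonneg_right hr' (mul_nonneg hq0 hD),
          mul_le_mul_of_nonneg_right hq2 (mul_nonneg hM hD)]

lemma norm_sumDker_le (hm : ∀ k, 2 ≤ m k) {A n : ℕ} (hn : n < Mf m A) (x : ∀ j, ZMod (m j)) :
    ‖sumDker m n x‖ ≤
      ∑ t ∈ range A, (m t : ℝ) ^ 2 * (Mf m t * ‖Dker m (Mf m t) x‖ + ‖sumDker m (Mf m t) x‖) := by
  induction A generalizing n with
  | zero => simp [Nat.lt_one_iff.mp hn, sumDker]
  | succ A ih =>
    have hM : 0 < Mf m A := Mf_pos (fun k => by linarith [hm k]) A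
    have hq : n / Mf m A < m A := (Nat.div_lt_iff_lt_mul hM).mpr hn
    have hr := Nat.mod_lt n hM
    rw [← Nat.div_add_mod' n (Mf m A), sum_range_succ, add_comm (∑ t ∈ range A, _)]
    exact (norm_sumDker_mul_Mf_add_le hm hq hr.le x).trans (add_le_add le_rfl (ih hr))

lemma sub_smul_evec_apply_of_ne {s k : ℕ} (hks : k ≠ s) (v : ℕ) (x : ∀ j, ZMod (m j)) :
    (x - v • evec m s) k = x k := by
  simp [evec, hks]

lemma sub_val_smul_evec_apply_self {s : ℕ} (hs : m s ≠ 0) (x : ∀ j, ZMod (m j)) :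
    (x - (x s).val • evec m s) s = 0 := by
  have : NeZero (m s) := ⟨hs⟩
  rw [Pi.sub_apply, Pi.smul_apply, evec, if_pos rfl, nsmul_eq_mul, mul_one,
    ZMod.natCast_zmod_val, sub_self]

lemma norm_sumDker_Mf_le (hm : ∀ k, 2 ≤ m k) (t : ℕ) (x : ∀ j, ZMod (m j)) :
    ‖sumDker m (Mf m t) x‖ ≤
      ∑ u ∈ range t, (Mf m (u + 1) : ℝ) * ‖Dker m (Mf m t) (x - (x u).val • evec m u)‖ := by
  induction t with
  | zero => simp [Mf, sumDker, Dker]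
  | succ t ih =>
    set γ := ∑ b ∈ range (m t), rad m t x ^ b
    have hγ : γ = if x t = 0 then (m t : ℂ) else 0 := geom_sum_rad (by linarith [hm t]) x
    have hlow : ∀ u ∈ range t, Dker m (Mf m (t + 1)) (x - (x u).val • evec m u)
        = γ * Dker m (Mf m t) (x - (x u).val • evec m u) := fun u hu => by
      rw [Dker_Mf_succ hm, hγ, sub_smul_evec_apply_of_ne (mem_range.mp hu).ne']
    have htop : Dker m (Mf m (t + 1)) (x - (x t).val • evec m t) = m t * Dker m (Mf m t) x := by
      rw [Dker_Mf_succ hm, sub_val_smul_evec_apply_self (by linarith [hm t]), if_pos rfl,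
        Dker_Mf_congr hm fun k hk => sub_smul_evec_apply_of_ne hk.ne _ x]
    calc ‖sumDker m (Mf m (t + 1)) x‖
        ≤ Mf m t * (m t : ℝ) ^ 2 * ‖Dker m (Mf m t) x‖ + ‖γ‖ * ‖sumDker m (Mf m t) x‖ := by
          rw [Mf_succ, sumDker_mul_Mf hm le_rfl]
          refine (norm_add_le _ _).trans (add_le_add ?_ (norm_mul _ _).le)
          rw [norm_mul, norm_mul, Complex.norm_natCast]
          gcongr
          exact norm_sum_geom_sum_le (norm_rad m t x).le _
      _ ≤ Mf m (t + 1) * ‖Dker m (Mf m (t + 1)) (x - (x t).val • evec m t)‖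
          + ∑ u ∈ range t, (Mf m (u + 1) : ℝ) *
              ‖Dker m (Mf m (t + 1)) (x - (x u).val • evec m u)‖ := by
          gcongr ?_ + ?_
          · refine le_of_eq ?_
            rw [htop, norm_mul, Complex.norm_natCast, Mf_succ]
            push_cast
            ring
          · refine (mul_le_mul_of_nonneg_left ih (norm_nonneg γ)).trans_eq ?_
            rw [mul_sum]
            refine sum_congr rfl fun u hu => ?_
            rw [hlow u hu, norm_mul]
            ring
      _ = _ := by rw [sum_range_succ, add_comm]

def shiftedDkerSum (m : ℕ → ℕ) (t : ℕ) (x : ∀ j, ZMod (m j)) : ℝ :=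
  ∑ u ∈ range (t + 1), (Mf m u : ℝ) *
    ∑ v ∈ Icc 1 (m u - 1), ‖Dker m (Mf m t) (x - v • evec m u)‖

lemma sum_shiftedDkerSum (m : ℕ → ℕ) (A : ℕ) (x : ∀ j, ZMod (m j)) :
    ∑ t ∈ range (A + 1), shiftedDkerSum m t x =
      ∑ s ∈ range (A + 1), (Mf m s : ℝ) *
        ∑ j ∈ Icc s A, ∑ v ∈ Icc 1 (m s - 1), ‖Dker m (Mf m j) (x - v • evec m s)‖ := by
  simp_rw [shiftedDkerSum, mul_sum]
  exact sum_comm' fun t u => by simp only [mem_range, mem_Icc]; omega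

lemma Mf_mul_norm_Dker_le_shiftedDkerSum (hm : ∀ k, 2 ≤ m k) (t : ℕ) (x : ∀ j, ZMod (m j)) :
    Mf m t * ‖Dker m (Mf m t) x‖ ≤ shiftedDkerSum m t x := by
  have hx : Dker m (Mf m t) (x - (1 : ℕ) • evec m t) = Dker m (Mf m t) x :=
    Dker_Mf_congr hm fun k hk => sub_smul_evec_apply_of_ne hk.ne _ x
  refine le_trans ?_ (single_le_sum (fun u _ => by positivity) (self_mem_range_succ t))
  refine mul_le_mul_of_nonneg_left ?_ (Nat.cast_nonneg _)
  rw [← hx]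
  exact single_le_sum (f := fun v => ‖Dker m (Mf m t) (x - v • evec m t)‖)
    (fun _ _ => norm_nonneg _) (mem_Icc.mpr ⟨le_rfl, by have := hm t; omega⟩)

lemma norm_Dker_sub_val_smul_evec_le {u : ℕ} (hu : m u ≠ 0) (n : ℕ) (x : ∀ j, ZMod (m j)) :
    ‖Dker m n (x - (x u).val • evec m u)‖ ≤
      ‖Dker m n x‖ + ∑ v ∈ Icc 1 (m u - 1), ‖Dker m n (x - v • evec m u)‖ := by
  have : NeZero (m u) := ⟨hu⟩
  rcases Nat.eq_zero_or_pos (x u).val with h0 | hpos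
  · rw [h0, zero_smul, sub_zero]
    exact le_add_of_nonneg_right (sum_nonneg fun _ _ => norm_nonneg _)
  · refine le_add_of_nonneg_of_le (norm_nonneg _) (single_le_sum
      (f := fun v => ‖Dker m n (x - v • evec m u)‖) (fun _ _ => norm_nonneg _) ?_)
    have := ZMod.val_lt (x u)
    exact mem_Icc.mpr ⟨hpos, by omega⟩

lemma sum_Mf_mul_norm_Dker_le_two_mul_shiftedDkerSum (hm : ∀ k, 2 ≤ m k) (t : ℕ)
    (x : ∀ j, ZMod (m j)) :
    ∑ u ∈ range t, (Mf m u : ℝ) * ‖Dker m (Mf m t) (x - (x u).val • evec m u)‖ ≤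
      2 * shiftedDkerSum m t x :=
  calc ∑ u ∈ range t, (Mf m u : ℝ) * ‖Dker m (Mf m t) (x - (x u).val • evec m u)‖
      ≤ ∑ u ∈ range t, (Mf m u : ℝ) * (‖Dker m (Mf m t) x‖
          + ∑ v ∈ Icc 1 (m u - 1), ‖Dker m (Mf m t) (x - v • evec m u)‖) :=
        sum_le_sum fun u _ => mul_le_mul_of_nonneg_left
          (norm_Dker_sub_val_smul_evec_le (by linarith [hm u]) _ x) (Nat.cast_nonneg _)
    _ = (∑ u ∈ range t, (Mf m u : ℝ)) * ‖Dker m (Mf m t) x‖ + ∑ u ∈ range t, (Mf m u : ℝ) *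
          ∑ v ∈ Icc 1 (m u - 1), ‖Dker m (Mf m t) (x - v • evec m u)‖ := by
        rw [sum_mul, ← sum_add_distrib]
        simp_rw [mul_add]
    _ ≤ Mf m t * ‖Dker m (Mf m t) x‖ + shiftedDkerSum m t x := by
        gcongr
        · exact_mod_cast sum_range_Mf_le hm t
        · exact sum_le_sum_of_subset_of_nonneg (range_subset_range.mpr t.le_succ)
            fun u _ _ => by positivity
    _ ≤ 2 * shiftedDkerSum m t x := by
        linarith [Mf_mul_norm_Dker_le_shiftedDkerSum hm t x]

lemma Mf_mul_norm_Dker_add_norm_sumDker_le (hm : ∀ k, 2 ≤ m k) {B : ℕ} (hB : ∀ k, m k ≤ B)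
    (t : ℕ) (x : ∀ j, ZMod (m j)) :
    Mf m t * ‖Dker m (Mf m t) x‖ + ‖sumDker m (Mf m t) x‖ ≤
      (1 + 2 * B) * shiftedDkerSum m t x := by
  have hS : ‖sumDker m (Mf m t) x‖ ≤ B * (2 * shiftedDkerSum m t x) :=
    calc ‖sumDker m (Mf m t) x‖
        ≤ ∑ u ∈ range t, (Mf m (u + 1) : ℝ) *
            ‖Dker m (Mf m t) (x - (x u).val • evec m u)‖ := norm_sumDker_Mf_le hm t x
      _ ≤ ∑ u ∈ range t, B * ((Mf m u : ℝ) *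
            ‖Dker m (Mf m t) (x - (x u).val • evec m u)‖) := by
          refine sum_le_sum fun u _ => ?_
          rw [Mf_succ, Nat.cast_mul, mul_assoc]
          gcongr
          exact_mod_cast hB u
      _ ≤ B * (2 * shiftedDkerSum m t x) := by
          rw [← mul_sum]
          gcongr
          exact sum_Mf_mul_norm_Dker_le_two_mul_shiftedDkerSum hm t x
  linarith [Mf_mul_norm_Dker_le_shiftedDkerSum hm t x]

theorem stmt7 (m : ℕ → ℕ) (hm : ∀ k, 2 ≤ m k) (B : ℕ) (hB : ∀ k, m k ≤ B) :
    ∃ c : ℝ, 0 < c ∧ ∀ (A n : ℕ) (x : ∀ j, ZMod (m j)), Mf m A ≤ n → n < Mf m (A + 1) →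
      (n : ℝ) * ‖Fejer m n x‖ ≤
        c * ∑ s ∈ Finset.range (A + 1), (Mf m s : ℝ) *
          ∑ j ∈ Finset.Icc s A, ∑ v ∈ Finset.Icc 1 (m s - 1),
            ‖Dker m (Mf m j) (x - v • evec m s)‖ := by
  have hB0 : (0 : ℝ) < B := by
    have := hm 0; have := hB 0; exact_mod_cast (by omega : 0 < B)
  refine ⟨B ^ 2 * (1 + 2 * B), by positivity, fun A n x _ hn => ?_⟩
  rw [← sum_shiftedDkerSum, mul_sum, ← Complex.norm_natCast n, ← norm_mul, natCast_mul_Fejer]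
  refine (norm_sumDker_le hm hn x).trans (sum_le_sum fun t _ => ?_)
  rw [mul_assoc]
  gcongr
  · exact_mod_cast hB t
  · exact Mf_mul_norm_Dker_add_norm_sumDker_le hm hB t x
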